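/- Let R > 0, φ > 0, let n be a positive integer, and let ρ : Fin n → ℝ satisfy ∑_{i=1}^n ρ_i = 0. Then n^{-1} ∑_{i=1}^{n} E_τ[ log{ 1 + e^{−2Rρ_i} e^{−2φ√R τ − 2R} } ] ≥ E_τ[ log{ 1 + e^{−2φ√R τ − 2R} } ]. -/

import Mathlib

open MeasureTheory Real

/-- Expectation with respect to a standard Gaussian variable `τ`. -/
noncomputable def gaussExp (p : ℝ → ℝ) : ℝ :=
  ∫ τ : ℝ, (Real.sqrt (2 * Real.pi))⁻¹ * Real.exp (-τ ^ 2 / 2) * p τ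

lemma convexOn_log_one_add_mul_exp {c : ℝ} (hc : 0 < c) :
    ConvexOn ℝ Set.univ (fun x => Real.log (1 + c * Real.exp x)) := by
  have hpos : ∀ x : ℝ, 0 < 1 + c * Real.exp x := fun x => by positivity
  have hd1 : ∀ x : ℝ, HasDerivAt (fun x => Real.log (1 + c * Real.exp x))
      (c * Real.exp x / (1 + c * Real.exp x)) x := by
    intro x
    have h1 : HasDerivAt (fun x : ℝ => 1 + c * Real.exp x) (c * Real.exp x) x := by
      simpa using ((Real.hasDerivAt_exp x).const_mul c).const_add 1
    exact h1.log (hpos x).ne'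
  have hderiv : deriv (fun x => Real.log (1 + c * Real.exp x)) =
      fun x => c * Real.exp x / (1 + c * Real.exp x) := funext fun x => (hd1 x).deriv
  have hd2 : ∀ x : ℝ, HasDerivAt (fun x => c * Real.exp x / (1 + c * Real.exp x))
      (c * Real.exp x / (1 + c * Real.exp x) ^ 2) x := by
    intro x
    have hu : HasDerivAt (fun x : ℝ => c * Real.exp x) (c * Real.exp x) x :=
      (Real.hasDerivAt_exp x).const_mul c
    have hv : HasDerivAt (fun x : ℝ => 1 + c * Real.exp x) (c * Real.exp x) x := by
      simpa using ((Real.hasDerivAt_exp x).const_mul c).const_add 1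
    have := hu.div hv (hpos x).ne'
    refine this.congr_deriv ?_
    congr 1
    ring
  apply convexOn_of_deriv2_nonneg' convex_univ
  · intro x _
    exact (hd1 x).differentiableAt.differentiableWithinAt
  · intro x _
    rw [hderiv]
    exact (hd2 x).differentiableAt.differentiableWithinAt
  · intro x _
    have : deriv^[2] (fun x => Real.log (1 + c * Real.exp x)) x =
        c * Real.exp x / (1 + c * Real.exp x) ^ 2 := by
      rw [Function.iterate_succ, Function.iterate_one, Function.comp_apply, hderiv]
      exact (hd2 x).deriv
    rw [this]
    positivity

lemma jensen_log {n : ℕ} (hn : 0 < n) (x : Fin n → ℝ) (hx : ∑ i, x i = 0)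
    {c : ℝ} (hc : 0 < c) :
    Real.log (1 + c) ≤ (n : ℝ)⁻¹ * ∑ i, Real.log (1 + Real.exp (x i) * c) := by
  have hn' : (0 : ℝ) < n := Nat.cast_pos.mpr hn
  have h := (convexOn_log_one_add_mul_exp hc).map_sum_le
    (t := Finset.univ) (w := fun _ : Fin n => (n : ℝ)⁻¹) (p := x)
    (fun i _ => by positivity)
    (by simp [Finset.sum_const, Finset.card_univ]; field_simp)
    (fun i _ => Set.mem_univ _)
  have hz : ∑ i, (n : ℝ)⁻¹ • x i = 0 := by
    simp only [smul_eq_mul, ← Finset.mul_sum, hx, mul_zero]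
  rw [hz] at h
  simp only [Real.exp_zero, mul_one, smul_eq_mul] at h
  calc Real.log (1 + c) ≤ ∑ i, (n : ℝ)⁻¹ * Real.log (1 + c * Real.exp (x i)) := h
    _ = (n : ℝ)⁻¹ * ∑ i, Real.log (1 + Real.exp (x i) * c) := by
        rw [Finset.mul_sum]; congr 1; ext i; rw [mul_comm c]

lemma integrable_gauss_log (a b : ℝ) :
    Integrable (fun τ : ℝ => (Real.sqrt (2 * Real.pi))⁻¹ * Real.exp (-τ ^ 2 / 2) *
      Real.log (1 + Real.exp (a * τ + b))) := by
  have hw : ∀ τ : ℝ, Real.exp (-τ ^ 2 / 2) = Real.exp (-(1/2 : ℝ) * τ ^ 2) := by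
    intro τ; ring_nf
  have hint1 : Integrable (fun τ : ℝ => Real.exp (-(1/2 : ℝ) * τ ^ 2)) :=
    integrable_exp_neg_mul_sq (by norm_num)
  have hint2 : Integrable (fun τ : ℝ => |τ| * Real.exp (-(1/2 : ℝ) * τ ^ 2)) := by
    have := (integrable_mul_exp_neg_mul_sq (b := 1/2) (by norm_num)).abs
    refine this.congr (Filter.Eventually.of_forall fun τ => ?_)
    simp [abs_mul, abs_of_nonneg (Real.exp_pos _).le]
  have hbound : Integrable (fun τ : ℝ =>
      (Real.sqrt (2 * Real.pi))⁻¹ * ((Real.log 2 + |b|) * Real.exp (-(1/2 : ℝ) * τ ^ 2)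
        + |a| * (|τ| * Real.exp (-(1/2 : ℝ) * τ ^ 2)))) :=
    ((hint1.const_mul _).add (hint2.const_mul _)).const_mul _
  refine hbound.mono' ?_ (Filter.Eventually.of_forall fun τ => ?_)
  · apply Continuous.aestronglyMeasurable
    apply Continuous.mul
    · continuity
    · apply Continuous.log
      · continuity
      · intro τ; positivity
  · have hwpos : (0 : ℝ) ≤ (Real.sqrt (2 * Real.pi))⁻¹ * Real.exp (-τ ^ 2 / 2) := by positivity
    have hlog0 : 0 ≤ Real.log (1 + Real.exp (a * τ + b)) := by
      apply Real.log_nonneg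
      have := (Real.exp_pos (a * τ + b)).le
      linarith
    have hlogle : Real.log (1 + Real.exp (a * τ + b)) ≤ Real.log 2 + (|a| * |τ| + |b|) := by
      have h1 : (1 : ℝ) + Real.exp (a * τ + b) ≤ 2 * Real.exp (|a| * |τ| + |b|) := by
        have h2 : a * τ + b ≤ |a| * |τ| + |b| := by
          calc a * τ + b ≤ |a * τ| + |b| := add_le_add (le_abs_self _) (le_abs_self _)
            _ = |a| * |τ| + |b| := by rw [abs_mul]
        have h3 : Real.exp (a * τ + b) ≤ Real.exp (|a| * |τ| + |b|) := Real.exp_le_exp.mpr h2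
        have h4 : (1 : ℝ) ≤ Real.exp (|a| * |τ| + |b|) := by
          rw [← Real.exp_zero]
          apply Real.exp_le_exp.mpr
          positivity
        linarith
      calc Real.log (1 + Real.exp (a * τ + b)) ≤ Real.log (2 * Real.exp (|a| * |τ| + |b|)) := by
            apply Real.log_le_log (by positivity) h1
        _ = Real.log 2 + (|a| * |τ| + |b|) := by
            rw [Real.log_mul (by norm_num) (Real.exp_pos _).ne', Real.log_exp]
    rw [Real.norm_eq_abs, abs_mul, abs_of_nonneg hwpos, abs_of_nonneg hlog0]
    rw [hw τ]
    have hw2 : (0:ℝ) ≤ (Real.sqrt (2 * Real.pi))⁻¹ := by positivity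
    have hexp : (0:ℝ) ≤ Real.exp (-(1/2 : ℝ) * τ ^ 2) := (Real.exp_pos _).le
    calc (Real.sqrt (2 * Real.pi))⁻¹ * Real.exp (-(1/2 : ℝ) * τ ^ 2) *
          Real.log (1 + Real.exp (a * τ + b))
        ≤ (Real.sqrt (2 * Real.pi))⁻¹ * Real.exp (-(1/2 : ℝ) * τ ^ 2) *
          (Real.log 2 + (|a| * |τ| + |b|)) := by
          apply mul_le_mul_of_nonneg_left hlogle (by positivity)
      _ = (Real.sqrt (2 * Real.pi))⁻¹ * ((Real.log 2 + |b|) * Real.exp (-(1/2 : ℝ) * τ ^ 2)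
            + |a| * (|τ| * Real.exp (-(1/2 : ℝ) * τ ^ 2))) := by ring

/-- The lower bound `F^l` of the paper, obtained by Jensen's inequality from the
convexity in `ρ` of `E_τ[log{1 + e^{−2Rρ} e^{−2φ√R τ − 2R}}]`. -/
theorem Fl_le_F
    (R φ : ℝ) (hR : 0 < R) (hφ : 0 < φ)
    (n : ℕ) (hn : 0 < n) (ρ : Fin n → ℝ) (hρsum : ∑ i, ρ i = 0) :
    (n : ℝ)⁻¹ * ∑ i, gaussExp (fun τ =>
        Real.log (1 + Real.exp (-2 * R * ρ i) *
          Real.exp (-2 * φ * Real.sqrt R * τ - 2 * R))) ≥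
      gaussExp (fun τ =>
        Real.log (1 + Real.exp (-2 * φ * Real.sqrt R * τ - 2 * R))) := by
  set a : ℝ := -2 * φ * Real.sqrt R with ha
  -- integrability of each integrand
  have hfi : ∀ i : Fin n, Integrable (fun τ : ℝ =>
      (Real.sqrt (2 * Real.pi))⁻¹ * Real.exp (-τ ^ 2 / 2) *
        Real.log (1 + Real.exp (-2 * R * ρ i) * Real.exp (a * τ - 2 * R))) := by
    intro i
    have := integrable_gauss_log a (-2 * R + (-2 * R * ρ i))
    refine this.congr (Filter.Eventually.of_forall fun τ => ?_)
    simp only [← Real.exp_add]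
    ring_nf
  have hg : Integrable (fun τ : ℝ =>
      (Real.sqrt (2 * Real.pi))⁻¹ * Real.exp (-τ ^ 2 / 2) *
        Real.log (1 + Real.exp (a * τ - 2 * R))) := by
    have := integrable_gauss_log a (-2 * R)
    refine this.congr (Filter.Eventually.of_forall fun τ => ?_)
    ring_nf
  rw [ge_iff_le]
  unfold gaussExp
  simp only [ha] at *
  calc (∫ τ : ℝ, (Real.sqrt (2 * Real.pi))⁻¹ * Real.exp (-τ ^ 2 / 2) *
        Real.log (1 + Real.exp (-2 * φ * Real.sqrt R * τ - 2 * R)))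
      ≤ ∫ τ : ℝ, (n : ℝ)⁻¹ * ∑ i, (Real.sqrt (2 * Real.pi))⁻¹ * Real.exp (-τ ^ 2 / 2) *
          Real.log (1 + Real.exp (-2 * R * ρ i) *
            Real.exp (-2 * φ * Real.sqrt R * τ - 2 * R)) := by
        apply integral_mono hg (((integrable_finset_sum _ (fun i _ => hfi i)).const_mul _))
        intro τ
        have hc : (0:ℝ) < Real.exp (-2 * φ * Real.sqrt R * τ - 2 * R) := Real.exp_pos _
        have hsum0 : ∑ i, (-2 * R * ρ i) = 0 := by
          rw [← Finset.mul_sum, hρsum, mul_zero]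
        have hj := jensen_log hn (fun i => -2 * R * ρ i) hsum0 hc
        set w : ℝ := (Real.sqrt (2 * Real.pi))⁻¹ * Real.exp (-τ ^ 2 / 2) with hwdef
        have hw : 0 ≤ w := by rw [hwdef]; positivity
        calc w * Real.log (1 + Real.exp (-2 * φ * Real.sqrt R * τ - 2 * R))
            ≤ w * ((n : ℝ)⁻¹ * ∑ i, Real.log (1 + Real.exp (-2 * R * ρ i) *
                Real.exp (-2 * φ * Real.sqrt R * τ - 2 * R))) :=
              mul_le_mul_of_nonneg_left hj hw
          _ = (n : ℝ)⁻¹ * ∑ i, w * Real.log (1 + Real.exp (-2 * R * ρ i) *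
                Real.exp (-2 * φ * Real.sqrt R * τ - 2 * R)) := by
              simp only [Finset.mul_sum]
              exact Finset.sum_congr rfl fun i _ => by ring
      _ = (n : ℝ)⁻¹ * ∑ i, ∫ τ : ℝ, (Real.sqrt (2 * Real.pi))⁻¹ * Real.exp (-τ ^ 2 / 2) *
          Real.log (1 + Real.exp (-2 * R * ρ i) *
            Real.exp (-2 * φ * Real.sqrt R * τ - 2 * R)) := by
        rw [integral_const_mul, integral_finset_sum _ (fun i _ => hfi i)]
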